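/- Let m ≥ 2 be an integer. The intersection graph of ideals G(ℤ_m) is weakly perfect, i.e., its chromatic number equals its clique number. -/

import Mathlib

/-- The intersection graph of ideals of `R`: vertices are the nontrivial ideals of `R`,
and two distinct vertices `I`, `J` are adjacent iff `I ∩ J ≠ 0`. -/
def idealGraph (R : Type*) [CommRing R] :
    SimpleGraph {I : Ideal R // I ≠ ⊥ ∧ I ≠ ⊤} where
  Adj I J := I ≠ J ∧ I.1 ⊓ J.1 ≠ ⊥
  symm := ⟨fun I J h => ⟨h.1.symm, by rw [inf_comm]; exact h.2⟩⟩
  loopless := ⟨fun I h => h.1 rfl⟩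

/-!
The nontrivial ideals of `ℤ/m` are the ideals `(m / x)`, with `x` elements, for the divisors
`1 < x < m` of `m`, and two of them meet nontrivially iff their sizes are not coprime. Sort these
divisors by their prime support `S ⊆ P`, the set of primes of `m`; divisors with intersecting
supports are adjacent. In each complementary pair `{S, P \ S}` call heavy the support carried by
more divisors, ties broken by a fixed prime. The number of divisors with support `S` grows with
`S` as long as `S ≠ P`, so heavy supports pairwise intersect and the divisors with heavy support
form a clique. Mapping the divisors of each light support injectively to divisors of the
complementary heavy support colors the graph with this clique.
-/

open Finset

namespace SimpleGraph

variable {V W : Type*} {G : SimpleGraph V} {H : SimpleGraph W}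

lemma cliqueNum_le_of_embedding [Finite W] (f : G ↪g H) : G.cliqueNum ≤ H.cliqueNum := by
  obtain ⟨s, hs⟩ := G.exists_isNClique_cliqueNum
  have hclique : H.IsClique (s.map f.toEmbedding : Set W) := by
    rw [coe_map]
    rintro _ ⟨u, hu, rfl⟩ _ ⟨v, hv, rfl⟩ huv
    exact f.map_adj_iff.mpr (hs.isClique hu hv (ne_of_apply_ne f huv))
  calc G.cliqueNum = #(s.map f.toEmbedding) := by rw [card_map, hs.card_eq]
    _ ≤ H.cliqueNum := hclique.card_le_cliqueNum

lemma cliqueNum_congr [Finite V] (f : G ≃g H) : G.cliqueNum = H.cliqueNum :=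
  have : Finite W := .of_equiv V f.toEquiv
  le_antisymm (cliqueNum_le_of_embedding f.toEmbedding)
    (cliqueNum_le_of_embedding f.symm.toEmbedding)

theorem chromaticNumber_eq_cliqueNum_of_coloring [Finite V] {K : Finset V}
    (hK : G.IsClique (K : Set V)) (C : G.Coloring K) : G.chromaticNumber = G.cliqueNum :=
  le_antisymm
    (calc G.chromaticNumber ≤ #K := by simpa using C.colorable.chromaticNumber_le
      _ ≤ G.cliqueNum := by exact_mod_cast hK.card_le_cliqueNum)
    G.cliqueNum_le_chromaticNumber

end SimpleGraph

lemma exists_fiberwise_injective {V β : Type*} [Fintype V] [DecidableEq β] (s : V → β)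
    (φ : β → β) (h : ∀ v, Fintype.card {w // s w = s v} ≤ Fintype.card {w // s w = φ (s v)}) :
    ∃ f : V → V, ∀ v, s (f v) = φ (s v) ∧ ∀ u, s u = s v → f u = f v → u = v := by
  have emb : ∀ b, Nonempty ({w // s w = b} ↪ {w // s w = φ b}) := by
    intro b
    by_cases hb : ∃ v, s v = b
    · obtain ⟨v, rfl⟩ := hb
      exact Function.Embedding.nonempty_of_card_le (h v)
    · push Not at hb
      exact ⟨⟨fun w => (hb w.1 w.2).elim, fun w => (hb w.1 w.2).elim⟩⟩
  let e b := (emb b).some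
  have he : ∀ b v (hv : s v = b), (e (s v) ⟨v, rfl⟩ : V) = e b ⟨v, hv⟩ := by
    rintro _ v rfl
    rfl
  refine ⟨fun v => e (s v) ⟨v, rfl⟩, fun v => ⟨(e (s v) ⟨v, rfl⟩).2, fun u huv hf => ?_⟩⟩
  dsimp only at hf
  rw [he _ u huv] at hf
  exact congrArg Subtype.val ((e (s v)).injective (Subtype.ext hf))

section HeavySide

variable {V α : Type*} [Fintype V] [DecidableEq α] (P : Finset α) (s : V → Finset α) (p₀ : α)

def IsHeavy (S : Finset α) : Prop :=
  Fintype.card {v // s v = P \ S} < Fintype.card {v // s v = S} ∨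
    Fintype.card {v // s v = P \ S} = Fintype.card {v // s v = S} ∧ p₀ ∈ S

open Classical in
noncomputable def heavySide (S : Finset α) : Finset α :=
  if IsHeavy P s p₀ S then S else P \ S

variable {P s p₀}

lemma card_le_card_heavySide (S : Finset α) :
    Fintype.card {v // s v = S} ≤ Fintype.card {v // s v = heavySide P s p₀ S} := by
  unfold heavySide IsHeavy
  split_ifs with h
  · exact le_rfl
  · omega

lemma isHeavy_heavySide (hp₀ : p₀ ∈ P) {S : Finset α} (hS : S ⊆ P) :
    IsHeavy P s p₀ (heavySide P s p₀ S) := by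
  unfold heavySide
  split_ifs with h
  · exact h
  · unfold IsHeavy at h ⊢
    rw [Finset.sdiff_sdiff_eq_self hS]
    push Not at h
    obtain ⟨hle, htie⟩ := h
    rcases hle.lt_or_eq with hlt | heq
    · exact .inl hlt
    · exact .inr ⟨heq, mem_sdiff.mpr ⟨hp₀, htie heq.symm⟩⟩

lemma eq_of_heavySide_eq {S T : Finset α} (hS : S ⊆ P) (hT : T ⊆ P) (hST : ¬Disjoint S T)
    (h : heavySide P s p₀ S = heavySide P s p₀ T) : S = T := by
  unfold heavySide at h
  split_ifs at h with hS' hT' hT'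
  · exact h
  · exact absurd (h ▸ disjoint_sdiff_self_left) hST
  · exact absurd (h ▸ disjoint_sdiff_self_right) hST
  · rw [← Finset.sdiff_sdiff_eq_self hS, h, Finset.sdiff_sdiff_eq_self hT]

lemma not_disjoint_of_isHeavy
    (hmono : ∀ S T, S ⊆ T → T ⊂ P → Fintype.card {v // s v = S} ≤ Fintype.card {v // s v = T})
    {S T : Finset α} (hS : S ⊆ P) (hT : T ⊆ P) (hSne : S.Nonempty) (hTne : T.Nonempty)
    (hS' : IsHeavy P s p₀ S) (hT' : IsHeavy P s p₀ T) : ¬Disjoint S T := by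
  intro hST
  have h₁ := hmono T (P \ S) (subset_sdiff.mpr ⟨hT, hST.symm⟩) (sdiff_ssubset hS hSne)
  have h₂ := hmono S (P \ T) (subset_sdiff.mpr ⟨hS, hST⟩) (sdiff_ssubset hT hTne)
  unfold IsHeavy at hS' hT'
  rcases hS' with hS' | ⟨hS', hpS⟩ <;> rcases hT' with hT' | ⟨hT', hpT⟩
  · omega
  · omega
  · omega
  · exact disjoint_left.mp hST hpS hpT

theorem SimpleGraph.chromaticNumber_eq_cliqueNum_of_adj_iff_not_disjoint {G : SimpleGraph V}
    (hadj : ∀ u v, G.Adj u v ↔ u ≠ v ∧ ¬Disjoint (s u) (s v)) (hsP : ∀ v, s v ⊆ P)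
    (hne : ∀ v, (s v).Nonempty)
    (hmono : ∀ S T, S ⊆ T → T ⊂ P → Fintype.card {v // s v = S} ≤ Fintype.card {v // s v = T})
    (hp₀ : p₀ ∈ P) : G.chromaticNumber = G.cliqueNum := by
  classical
  set K := univ.filter fun v => IsHeavy P s p₀ (s v)
  have hK : G.IsClique (K : Set V) := by
    intro u hu v hv huv
    simp only [K, coe_filter, mem_univ, true_and, Set.mem_ofPred_eq] at hu hv
    exact (hadj u v).mpr
      ⟨huv, not_disjoint_of_isHeavy hmono (hsP u) (hsP v) (hne u) (hne v) hu hv⟩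
  obtain ⟨f, hf⟩ := exists_fiberwise_injective s (heavySide P s p₀)
    fun v => card_le_card_heavySide (s v)
  have hfK : ∀ v, f v ∈ K := fun v => by
    simpa [K, (hf v).1] using isHeavy_heavySide hp₀ (hsP v)
  refine G.chromaticNumber_eq_cliqueNum_of_coloring hK
    (Coloring.mk (fun v => ⟨f v, hfK v⟩) fun {u v} huv hfuv => ?_)
  replace hfuv : f u = f v := congrArg Subtype.val hfuv
  obtain ⟨huv', hdisj⟩ := (hadj u v).mp huv
  have hsuv : s u = s v :=
    eq_of_heavySide_eq (hsP u) (hsP v) hdisj (by rw [← (hf u).1, ← (hf v).1, hfuv])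
  exact huv' ((hf v).2 u hsuv hfuv)

end HeavySide

namespace Nat

def nontrivialDivisors (m : ℕ) : Finset ℕ := m.divisors \ {1, m}

def nontrivialDivisorGraph (m : ℕ) : SimpleGraph m.nontrivialDivisors where
  Adj x y := x ≠ y ∧ ¬ Nat.Coprime x y
  symm := ⟨fun _ _ h => ⟨h.1.symm, fun hc => h.2 hc.symm⟩⟩
  loopless := ⟨fun _ h => h.1 rfl⟩

variable {m : ℕ}

lemma mem_nontrivialDivisors {x : ℕ} :
    x ∈ m.nontrivialDivisors ↔ x ∣ m ∧ m ≠ 0 ∧ x ≠ 1 ∧ x ≠ m := by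
  simp [nontrivialDivisors, and_assoc]

lemma div_mem_nontrivialDivisors {x : ℕ} (hx : x ∈ m.nontrivialDivisors) :
    m / x ∈ m.nontrivialDivisors := by
  obtain ⟨hxm, hm, hx1, hxm'⟩ := mem_nontrivialDivisors.mp hx
  have hinv := Nat.div_div_self hxm hm
  refine mem_nontrivialDivisors.mpr ⟨Nat.div_dvd_of_dvd hxm, hm, fun h => ?_, fun h => ?_⟩
  · rw [h, Nat.div_one] at hinv
    exact hxm' hinv.symm
  · rw [h, Nat.div_self (Nat.pos_of_ne_zero hm)] at hinv
    exact hx1 hinv.symm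

lemma primeFactors_mul_prod_sdiff {x : ℕ} {S T : Finset ℕ} (hx : x ≠ 0) (hxS : x.primeFactors = S)
    (hST : S ⊆ T) (hT : ∀ p ∈ T, p.Prime) :
    x.Coprime (∏ p ∈ T \ S, p) ∧ (x * ∏ p ∈ T \ S, p).primeFactors = T := by
  have hprime : ∀ p ∈ T \ S, p.Prime := fun p hp => hT p (mem_sdiff.mp hp).1
  have ht : ∏ p ∈ T \ S, p ≠ 0 := Finset.prod_ne_zero_iff.mpr fun p hp => (hprime p hp).ne_zero
  refine ⟨(Nat.disjoint_primeFactors hx ht).mp ?_, ?_⟩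
  · rw [hxS, Nat.primeFactors_prod hprime]
    exact disjoint_sdiff
  · rw [Nat.primeFactors_mul hx ht, hxS, Nat.primeFactors_prod hprime, union_sdiff_of_subset hST]

/-- Multiplying by the primes of `T \ S` injects the divisors with prime support `S` into those with
prime support `T`. -/
lemma card_primeFactors_fiber_le {S T : Finset ℕ} (hST : S ⊆ T) (hT : T ⊂ m.primeFactors) :
    Fintype.card {x : m.nontrivialDivisors // x.1.primeFactors = S} ≤
      Fintype.card {x : m.nontrivialDivisors // x.1.primeFactors = T} := by
  set t := ∏ p ∈ T \ S, p
  have htm : t ∣ m := (prod_dvd_prod_of_subset _ _ _ (sdiff_subset.trans hT.subset)).trans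
    (Nat.prod_primeFactors_dvd m)
  have hT_prime : ∀ p ∈ T, p.Prime := fun p hp => Nat.prime_of_mem_primeFactors (hT.subset hp)
  have hmem : ∀ x : {x : m.nontrivialDivisors // x.1.primeFactors = S},
      x.1.1 * t ∈ m.nontrivialDivisors ∧ (x.1.1 * t).primeFactors = T := by
    rintro ⟨⟨x, hx⟩, hxS⟩
    obtain ⟨hxm, hm, hx1, -⟩ := mem_nontrivialDivisors.mp hx
    obtain ⟨hcop, hfac⟩ := primeFactors_mul_prod_sdiff (ne_zero_of_dvd_ne_zero hm hxm) hxS hST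
      hT_prime
    refine ⟨mem_nontrivialDivisors.mpr ⟨hcop.mul_dvd_of_dvd_of_dvd hxm htm, hm,
      fun h => hx1 (Nat.eq_one_of_mul_eq_one_right h), fun h => hT.ne ?_⟩, hfac⟩
    rw [← hfac, h]
  refine Fintype.card_le_of_injective (fun x => ⟨⟨x.1.1 * t, (hmem x).1⟩, (hmem x).2⟩) ?_
  intro x y hxy
  have ht : 0 < t := Nat.pos_of_dvd_of_pos htm (Nat.pos_of_ne_zero
    (mem_nontrivialDivisors.mp x.1.2).2.1)
  exact Subtype.ext (Subtype.ext (Nat.eq_of_mul_eq_mul_right ht (congrArg (·.1.1) hxy)))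

theorem nontrivialDivisorGraph_chromaticNumber_eq_cliqueNum (hm : 2 ≤ m) :
    (nontrivialDivisorGraph m).chromaticNumber = (nontrivialDivisorGraph m).cliqueNum := by
  have hne : ∀ x : m.nontrivialDivisors, x.1 ≠ 0 ∧ x.1 ≠ 1 := fun x => by
    obtain ⟨hxm, hm, hx1, -⟩ := mem_nontrivialDivisors.mp x.2
    exact ⟨ne_zero_of_dvd_ne_zero hm hxm, hx1⟩
  refine SimpleGraph.chromaticNumber_eq_cliqueNum_of_adj_iff_not_disjoint
    (P := m.primeFactors) (s := fun x => x.1.primeFactors) (p₀ := m.minFac) ?_ ?_ ?_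
    (fun S T => card_primeFactors_fiber_le) ?_
  · intro x y
    rw [Nat.disjoint_primeFactors (hne x).1 (hne y).1]
    rfl
  · intro x
    obtain ⟨hxm, hm, -⟩ := mem_nontrivialDivisors.mp x.2
    exact Nat.primeFactors_mono hxm hm
  · intro x
    exact Nat.nonempty_primeFactors.mpr (by have := hne x; omega)
  · exact Nat.mem_primeFactors.mpr ⟨Nat.minFac_prime (by omega), Nat.minFac_dvd m, by omega⟩

end Nat

namespace ZMod

open Ideal

variable {m d e : ℕ}

lemma comap_span_natCast (hd : d ∣ m) :
    (span {(d : ZMod m)}).comap (Int.castRingHom (ZMod m)) = span {(d : ℤ)} := by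
  have hmap : span {(d : ZMod m)} = (span {(d : ℤ)}).map (Int.castRingHom (ZMod m)) := by
    simp [map_span]
  rw [hmap, comap_map_of_surjective _ ZMod.intCast_surjective, ← RingHom.ker_eq_comap_bot,
    ker_intCastRingHom, sup_eq_left, span_singleton_le_span_singleton]
  exact Int.natCast_dvd_natCast.mpr hd

lemma span_natCast_eq_span_natCast_iff (hd : d ∣ m) (he : e ∣ m) :
    span {(d : ZMod m)} = span {(e : ZMod m)} ↔ d = e := by
  refine ⟨fun h => ?_, fun h => h ▸ rfl⟩
  have h' := congrArg (Ideal.comap (Int.castRingHom (ZMod m))) h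
  rw [comap_span_natCast hd, comap_span_natCast he] at h'
  exact Nat.dvd_antisymm (Int.natCast_dvd_natCast.mp (span_singleton_le_span_singleton.mp h'.ge))
    (Int.natCast_dvd_natCast.mp (span_singleton_le_span_singleton.mp h'.le))

lemma exists_span_natCast_eq (I : Ideal (ZMod m)) : ∃ d, d ∣ m ∧ span {(d : ZMod m)} = I := by
  obtain ⟨g, hg⟩ := Submodule.IsPrincipal.principal (I.comap (Int.castRingHom (ZMod m)))
  rw [Ideal.submodule_span_eq, ← Int.span_natAbs] at hg
  have hm : (m : ℤ) ∈ I.comap (Int.castRingHom (ZMod m)) := by simp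
  rw [hg, mem_span_singleton] at hm
  refine ⟨g.natAbs, Int.natCast_dvd_natCast.mp hm, ?_⟩
  rw [← I.map_comap_of_surjective (Int.castRingHom (ZMod m)) ZMod.intCast_surjective, hg,
    map_span]
  simp

lemma span_natCast_inf_span_natCast (hd : d ∣ m) (he : e ∣ m) :
    span {(d : ZMod m)} ⊓ span {(e : ZMod m)} = span {((d.lcm e : ℕ) : ZMod m)} := by
  apply comap_injective_of_surjective (Int.castRingHom (ZMod m)) ZMod.intCast_surjective
  rw [comap_inf, comap_span_natCast hd, comap_span_natCast he,
    comap_span_natCast (Nat.lcm_dvd hd he), span_singleton_inf_span_singleton, ← Int.coe_lcm,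
    Int.lcm_natCast_natCast]

lemma span_natCast_eq_bot_iff (hd : d ∣ m) : span {(d : ZMod m)} = ⊥ ↔ d = m := by
  rw [span_singleton_eq_bot, natCast_eq_zero_iff]
  exact ⟨Nat.dvd_antisymm hd, fun h => h ▸ dvd_rfl⟩

lemma span_natCast_eq_top_iff (hd : d ∣ m) : span {(d : ZMod m)} = ⊤ ↔ d = 1 := by
  rw [span_singleton_eq_top, isUnit_iff_coprime, Nat.Coprime, Nat.gcd_eq_left hd]

lemma span_natCast_ne_bot_ne_top (hd : d ∈ m.nontrivialDivisors) :
    span {(d : ZMod m)} ≠ ⊥ ∧ span {(d : ZMod m)} ≠ ⊤ := by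
  obtain ⟨hdm, -, hd1, hdm'⟩ := Nat.mem_nontrivialDivisors.mp hd
  exact ⟨(span_natCast_eq_bot_iff hdm).not.mpr hdm', (span_natCast_eq_top_iff hdm).not.mpr hd1⟩

lemma span_div_inf_span_div_eq_bot_iff (hm : m ≠ 0) {x y : ℕ} (hx : x ∣ m) (hy : y ∣ m) :
    span {((m / x : ℕ) : ZMod m)} ⊓ span {((m / y : ℕ) : ZMod m)} = ⊥ ↔ x.Coprime y := by
  rw [span_natCast_inf_span_natCast (Nat.div_dvd_of_dvd hx) (Nat.div_dvd_of_dvd hy),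
    Nat.div_lcm_eq_div_gcd hx hy,
    span_natCast_eq_bot_iff (Nat.div_dvd_of_dvd ((Nat.gcd_dvd_left x y).trans hx)),
    Nat.div_eq_self, Nat.Coprime]
  simp [hm]

/-- `(m / x)` is the ideal of `ℤ/m` with `x` elements. -/
def idealOfCard (x : m.nontrivialDivisors) : {I : Ideal (ZMod m) // I ≠ ⊥ ∧ I ≠ ⊤} :=
  ⟨span {((m / x : ℕ) : ZMod m)}, span_natCast_ne_bot_ne_top (Nat.div_mem_nontrivialDivisors x.2)⟩

lemma idealOfCard_injective (hm : m ≠ 0) : Function.Injective (idealOfCard (m := m)) := by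
  intro x y h
  have hx := (Nat.mem_nontrivialDivisors.mp x.2).1
  have hy := (Nat.mem_nontrivialDivisors.mp y.2).1
  have h' := (span_natCast_eq_span_natCast_iff (Nat.div_dvd_of_dvd hx)
    (Nat.div_dvd_of_dvd hy)).mp (congrArg Subtype.val h)
  rw [Subtype.ext_iff, ← Nat.div_div_self hx hm, ← Nat.div_div_self hy hm, h']

lemma idealOfCard_surjective (hm : m ≠ 0) : Function.Surjective (idealOfCard (m := m)) := by
  rintro ⟨I, hI⟩
  obtain ⟨d, hdm, rfl⟩ := exists_span_natCast_eq I
  have hd : d ∈ m.nontrivialDivisors := Nat.mem_nontrivialDivisors.mpr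
    ⟨hdm, hm, (span_natCast_eq_top_iff hdm).not.mp hI.2, (span_natCast_eq_bot_iff hdm).not.mp hI.1⟩
  exact ⟨⟨m / d, Nat.div_mem_nontrivialDivisors hd⟩,
    Subtype.ext (by simp [idealOfCard, Nat.div_div_self hdm hm])⟩

/-- The intersection of the ideals with `x` and `y` elements has `gcd x y` elements. -/
lemma idealGraph_adj_idealOfCard_iff (hm : m ≠ 0) {x y : m.nontrivialDivisors} :
    (idealGraph (ZMod m)).Adj (idealOfCard x) (idealOfCard y) ↔ m.nontrivialDivisorGraph.Adj x y :=
  and_congr (idealOfCard_injective hm).ne_iff <| not_congr <|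
    span_div_inf_span_div_eq_bot_iff hm (Nat.mem_nontrivialDivisors.mp x.2).1
      (Nat.mem_nontrivialDivisors.mp y.2).1

noncomputable def nontrivialDivisorGraphIsoIdealGraph (hm : m ≠ 0) :
    m.nontrivialDivisorGraph ≃g idealGraph (ZMod m) where
  toEquiv := .ofBijective idealOfCard ⟨idealOfCard_injective hm, idealOfCard_surjective hm⟩
  map_rel_iff' := idealGraph_adj_idealOfCard_iff hm

end ZMod

/-- For every `m ≥ 2`, the intersection graph of ideals `G(ℤ_m)` is weakly
perfect: its chromatic number equals its clique number. -/
theorem idealGraph_weakly_perfect (m : ℕ) (hm : 2 ≤ m) :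
    (idealGraph (ZMod m)).chromaticNumber = ((idealGraph (ZMod m)).cliqueNum : ℕ∞) := by
  let e := ZMod.nontrivialDivisorGraphIsoIdealGraph (m := m) (by omega)
  rw [← SimpleGraph.chromaticNumber_congr e, ← SimpleGraph.cliqueNum_congr e]
  exact Nat.nontrivialDivisorGraph_chromaticNumber_eq_cliqueNum hm
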